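/- (Proposition 4, exact form for a fixed shadowing value.) Let α > 2, K > 0, ω > 0 and y > 0, and let g be a random variable with probability density f(x) = (1+K)·ω·exp(-K)·exp(-(1+K)·ω·x)·I₀(2·√(K·(1+K)·ω·x)) on (0, ∞) (non-central chi-square power of a Rician channel with Rice factor K and mean power 1/ω). Then the series T_I(y) := Γ(1 − 2/α)·Σ_{k=0}^∞ y^{k+1}·E[g^{k+1}·exp(-y·g)] / Γ(2 − 2/α + k) converges and equals (1+K)·exp(-K)·(1 − 2/α)^{-1}·y·ω·(y + (1+K)·ω)^{-2}·Σ_{l=0}^∞ ((l+1)/l!)·(K·(1+K)·ω/(y + (1+K)·ω))^l·₂F₁(l+2, 1; 2 − 2/α; y/(y + (1+K)·ω)), where for |x| < 1, ₂F₁(a, 1; c; x) = Σ_{k=0}^∞ (Γ(a+k)·Γ(c)/(Γ(a)·Γ(c+k)))·x^k denotes the Gauss hypergeometric series (which converges here since 0 < y/(y + (1+K)·ω) < 1). -/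

import Mathlib

/-!
Expanding `I₀(2√(a x)) = Σ_l (a x)^l / (l!)²` and integrating term by term against
`xⁿ e^{-q x}` (`∫ xⁿ e^{-q x} = n!/q^{n+1}`) turns the `k`-th term of `T_I(y)` into a series
over `l`. With `Γ(l+2+k) = (k+l+1)!` and `Γ(2 - 2/α) = (1 - 2/α) Γ(1 - 2/α)`, the `l`-th term
of the right-hand side is a series over `k` with the same nonnegative summand
`ricianSeriesTerm`, up to one common constant. The double series converges: `Γ(γ+k) ≥ Γ(γ) k!`
bounds each `k`-series by a negative binomial series, and what is left in `l` is of exponential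
type. So the two summations can be exchanged.
-/

open MeasureTheory Real Set

/-- The modified Bessel function of the first kind of order zero,
`I₀(u) = Σ_{j=0}^∞ (u/2)^{2j}/(j!)²`. -/
noncomputable def besselI0 (u : ℝ) : ℝ :=
  ∑' j : ℕ, (u / 2) ^ (2 * j) / ((Nat.factorial j : ℝ)) ^ 2

open scoped Nat

lemma besselI0_two_mul_sqrt {u : ℝ} (hu : 0 ≤ u) :
    besselI0 (2 * √u) = ∑' j : ℕ, u ^ j / (j ! : ℝ) ^ 2 := by
  unfold besselI0
  congr! 2 with j
  rw [mul_div_cancel_left₀ _ two_ne_zero, pow_mul, sq_sqrt hu]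

lemma integral_pow_mul_exp_neg_mul_Ioi (n : ℕ) {q : ℝ} (hq : 0 < q) :
    ∫ t in Ioi (0 : ℝ), t ^ n * exp (-(q * t)) = n ! / q ^ (n + 1) := by
  have h := integral_rpow_mul_exp_neg_mul_Ioi (a := n + 1) (by positivity) hq
  simp_rw [add_sub_cancel_right, rpow_natCast, Gamma_nat_eq_factorial] at h
  rw [h, div_rpow zero_le_one hq.le, one_rpow, ← Nat.cast_succ, rpow_natCast]
  field_simp

lemma integrableOn_pow_mul_exp_neg_mul_Ioi (n : ℕ) {q : ℝ} (hq : 0 < q) :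
    IntegrableOn (fun t : ℝ => t ^ n * exp (-(q * t))) (Ioi 0) :=
  .of_integral_ne_zero (by rw [integral_pow_mul_exp_neg_mul_Ioi n hq]; positivity)

lemma summable_succ_mul_pow_div_factorial {u : ℝ} (hu : 0 ≤ u) :
    Summable fun l : ℕ => ((l : ℝ) + 1) * u ^ l / l ! := by
  refine .of_nonneg_of_le (fun l => by positivity) (fun l => ?_)
    (Real.summable_pow_div_factorial (2 * u))
  have h : (l : ℝ) + 1 ≤ 2 ^ l := by exact_mod_cast Nat.lt_two_pow_self
  rw [mul_pow]
  gcongr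

lemma summable_pow_mul_factorial_add_div_factorial_sq (n : ℕ) {r : ℝ} (hr : 0 ≤ r) :
    Summable fun l : ℕ => r ^ l * (n + l)! / (l ! : ℝ) ^ 2 := by
  refine .of_nonneg_of_le (fun l => by positivity) (fun l => ?_)
    ((Real.summable_pow_div_factorial (2 * r)).mul_left (2 ^ n * n ! : ℝ))
  have hfac : ((n + l)! : ℝ) = (n + l).choose l * n ! * l ! := by
    exact_mod_cast (Nat.add_choose_mul_factorial_mul_factorial n l).symm
  have hchoose : ((n + l).choose l : ℝ) ≤ 2 ^ n * 2 ^ l := by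
    rw [← pow_add]; exact_mod_cast Nat.choose_le_two_pow _ _
  calc r ^ l * (n + l)! / (l ! : ℝ) ^ 2 = (n + l).choose l * n ! * r ^ l / l ! := by
        rw [hfac]; field_simp
    _ ≤ 2 ^ n * 2 ^ l * n ! * r ^ l / l ! := by gcongr
    _ = 2 ^ n * n ! * ((2 * r) ^ l / l !) := by ring

lemma Gamma_mul_factorial_le_Gamma_add {γ : ℝ} (hγ : 1 ≤ γ) (k : ℕ) :
    Gamma γ * k ! ≤ Gamma (γ + k) := by
  induction k with
  | zero => simp
  | succ k ih =>
    have hΓ : 0 < Gamma γ := Gamma_pos_of_pos (by linarith)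
    push_cast [Nat.factorial_succ]
    rw [← add_assoc, Gamma_add_one (by positivity), mul_left_comm]
    exact mul_le_mul (by linarith) ih (by positivity) (by positivity)

lemma hasSum_integral_pow_mul_exp_neg_mul_besselI0 (n : ℕ) {a q : ℝ} (ha : 0 ≤ a)
    (hq : 0 < q) :
    HasSum (fun l : ℕ => a ^ l * (n + l)! / ((l ! : ℝ) ^ 2 * q ^ (n + l + 1)))
      (∫ t in Ioi (0 : ℝ), t ^ n * exp (-(q * t)) * besselI0 (2 * √(a * t))) := by
  set F : ℕ → ℝ → ℝ := fun l t => a ^ l / (l ! : ℝ) ^ 2 * (t ^ (n + l) * exp (-(q * t)))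
  have hF_int (l : ℕ) :
      ∫ t in Ioi (0 : ℝ), F l t = a ^ l * (n + l)! / ((l ! : ℝ) ^ 2 * q ^ (n + l + 1)) := by
    rw [integral_const_mul, integral_pow_mul_exp_neg_mul_Ioi _ hq]
    field_simp
  have hF_norm (l : ℕ) : ∫ t in Ioi (0 : ℝ), ‖F l t‖ = ∫ t in Ioi (0 : ℝ), F l t :=
    setIntegral_congr_fun measurableSet_Ioi fun t (ht : 0 < t) => norm_of_nonneg (by positivity)
  have hsum : Summable fun l : ℕ => a ^ l * (n + l)! / ((l ! : ℝ) ^ 2 * q ^ (n + l + 1)) := by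
    refine ((summable_pow_mul_factorial_add_div_factorial_sq n (div_nonneg ha hq.le)).mul_left
      (q ^ (n + 1))⁻¹).congr fun l => ?_
    rw [div_pow]
    field_simp
    ring
  have hseries : EqOn (fun t => t ^ n * exp (-(q * t)) * besselI0 (2 * √(a * t)))
      (fun t => ∑' l, F l t) (Ioi 0) := fun t (ht : 0 < t) => by
    dsimp only
    rw [besselI0_two_mul_sqrt (by positivity), ← tsum_mul_left]
    refine tsum_congr fun l => ?_
    ring
  rw [setIntegral_congr_fun measurableSet_Ioi hseries, ← funext hF_int]
  refine hasSum_integral_of_summable_integral_norm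
    (fun l => (integrableOn_pow_mul_exp_neg_mul_Ioi _ hq).const_mul _) ?_
  simpa only [hF_norm, hF_int] using hsum

noncomputable def ricianPowerDensity (K ω x : ℝ) : ℝ :=
  (1 + K) * ω * exp (-K) * exp (-((1 + K) * ω * x)) * besselI0 (2 * √(K * (1 + K) * ω * x))

lemma hasSum_integral_pow_mul_exp_neg_mul_ricianPowerDensity (n : ℕ) {K ω y : ℝ}
    (hK : 0 ≤ K) (hω : 0 < ω) (hy : 0 ≤ y) :
    HasSum (fun l : ℕ => (1 + K) * ω * exp (-K) *
        ((K * (1 + K) * ω) ^ l * (n + l)! / ((l ! : ℝ) ^ 2 * (y + (1 + K) * ω) ^ (n + l + 1))))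
      (∫ x in Ioi (0 : ℝ), x ^ n * exp (-(y * x)) * ricianPowerDensity K ω x) := by
  have hintegrand (x : ℝ) : x ^ n * exp (-(y * x)) * ricianPowerDensity K ω x =
      (1 + K) * ω * exp (-K) * (x ^ n * exp (-((y + (1 + K) * ω) * x)) *
        besselI0 (2 * √(K * (1 + K) * ω * x))) := by
    rw [ricianPowerDensity,
      show -((y + (1 + K) * ω) * x) = -(y * x) + -((1 + K) * ω * x) by ring, exp_add]
    ring
  have hq : 0 < y + (1 + K) * ω := by positivity
  simp_rw [hintegrand, integral_const_mul]
  exact (hasSum_integral_pow_mul_exp_neg_mul_besselI0 n (by positivity) hq).mul_left _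

noncomputable def ricianSeriesTerm (γ x s : ℝ) (l k : ℕ) : ℝ :=
  s ^ l * x ^ k * (k + l + 1)! / ((l ! : ℝ) ^ 2 * Gamma (γ + k))

section ricianSeriesTerm

variable {γ x s : ℝ}

lemma ricianSeriesTerm_nonneg (hγ : 0 < γ) (hx : 0 ≤ x) (hs : 0 ≤ s) (l k : ℕ) :
    0 ≤ ricianSeriesTerm γ x s l k := by
  have := Gamma_pos_of_pos (add_pos_of_pos_of_nonneg hγ k.cast_nonneg)
  unfold ricianSeriesTerm
  positivity

lemma ricianSeriesTerm_le (hγ : 1 ≤ γ) (hx : 0 ≤ x) (hs : 0 ≤ s) (l k : ℕ) :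
    ricianSeriesTerm γ x s l k ≤
      (l + 1) * s ^ l / (l ! * Gamma γ) * ((k + (l + 1)).choose (l + 1) * x ^ k) := by
  have hΓ : 0 < Gamma γ := Gamma_pos_of_pos (by linarith)
  have hfac : ((k + l + 1)! : ℝ) = (k + (l + 1)).choose (l + 1) * k ! * (l + 1)! := by
    exact_mod_cast (Nat.add_choose_mul_factorial_mul_factorial k (l + 1)).symm
  calc ricianSeriesTerm γ x s l k
      = s ^ l * x ^ k * ((k + (l + 1)).choose (l + 1) * k ! * (l + 1)!) /
          ((l ! : ℝ) ^ 2 * Gamma (γ + k)) := by rw [ricianSeriesTerm, hfac]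
    _ ≤ s ^ l * x ^ k * ((k + (l + 1)).choose (l + 1) * k ! * (l + 1)!) /
          ((l ! : ℝ) ^ 2 * (Gamma γ * k !)) := by
        gcongr
        exact Gamma_mul_factorial_le_Gamma_add hγ k
    _ = _ := by
        push_cast [Nat.factorial_succ]
        field_simp

lemma summable_uncurry_ricianSeriesTerm (hγ : 1 ≤ γ) (hx₀ : 0 ≤ x) (hx₁ : x < 1)
    (hs : 0 ≤ s) :
    Summable (Function.uncurry (ricianSeriesTerm γ x s)) := by
  have hΓ : 0 < Gamma γ := Gamma_pos_of_pos (by linarith)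
  have hx : ‖x‖ < 1 := by rwa [norm_of_nonneg hx₀]
  have hmajorant (l : ℕ) : HasSum
      (fun k : ℕ => (l + 1) * s ^ l / (l ! * Gamma γ) * ((k + (l + 1)).choose (l + 1) * x ^ k))
      ((l + 1) * s ^ l / (l ! * Gamma γ) / (1 - x) ^ (l + 1 + 1)) := by
    rw [div_eq_mul_one_div _ ((1 - x) ^ _), ← tsum_choose_mul_geometric_of_norm_lt_one _ hx,
      ← tsum_mul_left]
    exact ((summable_choose_mul_geometric_of_norm_lt_one _ hx).mul_left _).hasSum
  have hnonneg := ricianSeriesTerm_nonneg (γ := γ) (by linarith) hx₀ hs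
  have hfiber (l : ℕ) : Summable (ricianSeriesTerm γ x s l) :=
    .of_nonneg_of_le (hnonneg l) (ricianSeriesTerm_le hγ hx₀ hs l) (hmajorant l).summable
  refine (summable_prod_of_nonneg fun p => hnonneg p.1 p.2).2 ⟨hfiber, ?_⟩
  refine .of_nonneg_of_le (fun l => tsum_nonneg (hnonneg l)) (fun l => ?_)
    ((summable_succ_mul_pow_div_factorial (div_nonneg hs (sub_nonneg.2 hx₁.le))).mul_left
      (Gamma γ * (1 - x) ^ 2)⁻¹)
  have hx₁' : 0 < 1 - x := sub_pos.2 hx₁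
  calc ∑' k, ricianSeriesTerm γ x s l k
      ≤ ∑' k : ℕ,
          (l + 1) * s ^ l / (l ! * Gamma γ) * ((k + (l + 1)).choose (l + 1) * x ^ k) :=
        (hfiber l).tsum_le_tsum (ricianSeriesTerm_le hγ hx₀ hs l) (hmajorant l).summable
    _ = (l + 1) * s ^ l / (l ! * Gamma γ) / (1 - x) ^ (l + 1 + 1) := (hmajorant l).tsum_eq
    _ = (Gamma γ * (1 - x) ^ 2)⁻¹ * ((l + 1) * (s / (1 - x)) ^ l / l !) := by
        rw [div_pow]
        field_simp
        ring

lemma hasSum_tsum_ricianSeriesTerm (hγ : 1 ≤ γ) (hx₀ : 0 ≤ x) (hx₁ : x < 1)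
    (hs : 0 ≤ s) :
    HasSum (fun k => ∑' l, ricianSeriesTerm γ x s l k)
      (∑' l, ∑' k, ricianSeriesTerm γ x s l k) := by
  have h := summable_uncurry_ricianSeriesTerm hγ hx₀ hx₁ hs
  rw [← h.tsum_comm]
  exact h.prod_symm.prod.hasSum

end ricianSeriesTerm

lemma pow_mul_integral_ricianPowerDensity_div_Gamma_eq {K ω y : ℝ} (hK : 0 ≤ K) (hω : 0 < ω)
    (hy : 0 ≤ y) (γ : ℝ) (k : ℕ) :
    y ^ (k + 1) *
        (∫ x in Ioi (0 : ℝ), x ^ (k + 1) * exp (-(y * x)) * ricianPowerDensity K ω x) /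
        Gamma (γ + k) =
      (1 + K) * ω * exp (-K) * y / (y + (1 + K) * ω) ^ 2 *
        ∑' l, ricianSeriesTerm γ (y / (y + (1 + K) * ω))
          (K * (1 + K) * ω / (y + (1 + K) * ω)) l k := by
  have hq : 0 < y + (1 + K) * ω := by positivity
  rw [← (hasSum_integral_pow_mul_exp_neg_mul_ricianPowerDensity (k + 1) hK hω hy).tsum_eq,
    ← tsum_mul_left, ← tsum_div_const, ← tsum_mul_left]
  refine tsum_congr fun l => ?_
  rw [ricianSeriesTerm, Nat.add_right_comm k 1 l]
  simp only [div_pow, mul_pow]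
  field_simp
  ring

lemma mul_gamma_ratio_eq_Gamma_mul_ricianSeriesTerm (γ x s : ℝ) (l k : ℕ) :
    ((l : ℝ) + 1) / l ! * s ^ l *
        (Gamma ((l : ℝ) + 2 + k) * Gamma γ / (Gamma ((l : ℝ) + 2) * Gamma (γ + k)) * x ^ k) =
      Gamma γ * ricianSeriesTerm γ x s l k := by
  have hΓ₁ : Gamma ((l : ℝ) + 2 + k) = (k + l + 1)! := by
    rw [← Gamma_nat_eq_factorial]; push_cast; ring_nf
  have hΓ₂ : Gamma ((l : ℝ) + 2) = (l + 1)! := by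
    rw [← Gamma_nat_eq_factorial]; push_cast; ring_nf
  rw [hΓ₁, hΓ₂, ricianSeriesTerm, Nat.factorial_succ l]
  push_cast
  field_simp

lemma mul_tsum_gamma_ratio_eq_Gamma_mul_tsum_ricianSeriesTerm (γ x s : ℝ) (l : ℕ) :
    ((l : ℝ) + 1) / l ! * s ^ l *
        ∑' k : ℕ,
          Gamma ((l : ℝ) + 2 + k) * Gamma γ / (Gamma ((l : ℝ) + 2) * Gamma (γ + k)) * x ^ k =
      Gamma γ * ∑' k, ricianSeriesTerm γ x s l k := by
  rw [← tsum_mul_left, ← tsum_mul_left]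
  exact tsum_congr (mul_gamma_ratio_eq_Gamma_mul_ricianSeriesTerm γ x s l)

lemma summable_gamma_ratio_mul_pow {γ x : ℝ} (hγ : 1 ≤ γ) (hx₀ : 0 ≤ x) (hx₁ : x < 1)
    (l : ℕ) :
    Summable fun k : ℕ =>
      Gamma ((l : ℝ) + 2 + k) * Gamma γ / (Gamma ((l : ℝ) + 2) * Gamma (γ + k)) * x ^ k := by
  have hne : ((l : ℝ) + 1) / l ! * 1 ^ l ≠ 0 := by positivity
  refine (summable_mul_left_iff hne).1 ?_
  exact (((summable_uncurry_ricianSeriesTerm hγ hx₀ hx₁ zero_le_one).prod_factor l).mul_left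
    _).congr fun k => (mul_gamma_ratio_eq_Gamma_mul_ricianSeriesTerm γ x 1 l k).symm

lemma summable_mul_tsum_gamma_ratio_mul_pow {γ x s : ℝ} (hγ : 1 ≤ γ) (hx₀ : 0 ≤ x)
    (hx₁ : x < 1) (hs : 0 ≤ s) :
    Summable fun l : ℕ => ((l : ℝ) + 1) / l ! * s ^ l *
      ∑' k : ℕ,
        Gamma ((l : ℝ) + 2 + k) * Gamma γ / (Gamma ((l : ℝ) + 2) * Gamma (γ + k)) * x ^ k :=
  ((summable_uncurry_ricianSeriesTerm hγ hx₀ hx₁ hs).prod.mul_left _).congr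
    fun l => (mul_tsum_gamma_ratio_eq_Gamma_mul_tsum_ricianSeriesTerm γ x s l).symm

/-- Proposition 4 (exact form for a fixed shadowing value ω): for Rician (non-central
chi-square) power fading with Rice factor `K > 0` and mean power `1/ω`, the interference
correction series `T_I(y)` converges and equals
`(1+K) e^{-K} (1-2/α)⁻¹ y ω (y+(1+K)ω)^{-2} Σ_l ((l+1)/l!) (K(1+K)ω/(y+(1+K)ω))^l
  ₂F₁(l+2, 1; 2-2/α; y/(y+(1+K)ω))`,
where the Gauss hypergeometric series is written out as a sum. -/
theorem TI_closed_form_rician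
    (α K ω y : ℝ) (hα : 2 < α) (hK : 0 < K) (hω : 0 < ω) (hy : 0 < y) :
    (∀ l : ℕ, Summable (fun k : ℕ =>
        Real.Gamma ((l : ℝ) + 2 + (k : ℝ)) * Real.Gamma (2 - 2 / α) /
          (Real.Gamma ((l : ℝ) + 2) * Real.Gamma (2 - 2 / α + (k : ℝ))) *
          (y / (y + (1 + K) * ω)) ^ k))
    ∧ Summable (fun l : ℕ =>
        (((l : ℝ) + 1) / (Nat.factorial l : ℝ)) * (K * (1 + K) * ω / (y + (1 + K) * ω)) ^ l *
          ∑' k : ℕ,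
            Real.Gamma ((l : ℝ) + 2 + (k : ℝ)) * Real.Gamma (2 - 2 / α) /
              (Real.Gamma ((l : ℝ) + 2) * Real.Gamma (2 - 2 / α + (k : ℝ))) *
              (y / (y + (1 + K) * ω)) ^ k)
    ∧ HasSum (fun k : ℕ =>
        Real.Gamma (1 - 2 / α) * y ^ (k + 1) *
          (∫ x in Set.Ioi (0 : ℝ), x ^ (k + 1) * Real.exp (-(y * x)) *
            ((1 + K) * ω * Real.exp (-K) * Real.exp (-((1 + K) * ω * x)) *
              besselI0 (2 * Real.sqrt (K * (1 + K) * ω * x)))) /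
          Real.Gamma (2 - 2 / α + (k : ℝ)))
      ((1 + K) * Real.exp (-K) * (1 - 2 / α)⁻¹ * y * ω * ((y + (1 + K) * ω) ^ 2)⁻¹ *
        ∑' l : ℕ,
          (((l : ℝ) + 1) / (Nat.factorial l : ℝ)) * (K * (1 + K) * ω / (y + (1 + K) * ω)) ^ l *
            ∑' k : ℕ,
              Real.Gamma ((l : ℝ) + 2 + (k : ℝ)) * Real.Gamma (2 - 2 / α) /
                (Real.Gamma ((l : ℝ) + 2) * Real.Gamma (2 - 2 / α + (k : ℝ))) *
                (y / (y + (1 + K) * ω)) ^ k) := by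
  have hc : 0 < 1 - 2 / α := by
    have := (div_lt_one (by linarith : (0 : ℝ) < α)).2 hα
    linarith
  have hγ : (1 : ℝ) ≤ 2 - 2 / α := by linarith
  have hq : 0 < y + (1 + K) * ω := by positivity
  have hx₀ : 0 ≤ y / (y + (1 + K) * ω) := by positivity
  have hx₁ : y / (y + (1 + K) * ω) < 1 := (div_lt_one hq).2 (by nlinarith)
  have hs : 0 ≤ K * (1 + K) * ω / (y + (1 + K) * ω) := by positivity
  refine ⟨summable_gamma_ratio_mul_pow hγ hx₀ hx₁,
    summable_mul_tsum_gamma_ratio_mul_pow hγ hx₀ hx₁ hs, ?_⟩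
  have hterm (k : ℕ) :=
    pow_mul_integral_ricianPowerDensity_div_Gamma_eq hK.le hω hy.le (2 - 2 / α) k
  simp only [ricianPowerDensity] at hterm
  have hconst : (1 + K) * exp (-K) * (1 - 2 / α)⁻¹ * y * ω * ((y + (1 + K) * ω) ^ 2)⁻¹ *
      Gamma (2 - 2 / α) =
        Gamma (1 - 2 / α) * ((1 + K) * ω * exp (-K) * y / (y + (1 + K) * ω) ^ 2) := by
    rw [show (2 : ℝ) - 2 / α = 1 - 2 / α + 1 by ring, Gamma_add_one hc.ne']
    generalize 1 - 2 / α = c at hc ⊢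
    field_simp
  rw [tsum_congr (mul_tsum_gamma_ratio_eq_Gamma_mul_tsum_ricianSeriesTerm _ _ _), tsum_mul_left,
    ← mul_assoc, hconst]
  refine ((hasSum_tsum_ricianSeriesTerm hγ hx₀ hx₁ hs).mul_left _).congr_fun fun k => ?_
  rw [mul_assoc, mul_div_assoc, hterm k]
  ring
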